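/- arXiv:2001.07750 — 2 statements merged into one kernel-verified Lean document; each statement's English description precedes it below -/
import Mathlib

section
/- PPU⁺(A) is a submonoid of the group PPU(A); the set of inverses of elements of PPU⁺(A) is exactly PPU⁻(A); and PPU⁺(A) ∩ PPU⁻(A) = {1}. Hence PPU⁺(A) is a pure submonoid and is the positive cone of a right-invariant partial order on PPU(A) (defined by φ ≤ φ' iff φ'φ⁻¹ ∈ PPU⁺(A)), with negative cone PPU⁻(A). -/
noncomputable section

/-- Finite Laurent polynomials `A[t,t⁻¹]` over a ring `A`, with convolution product. -/
abbrev Laurent (A : Type*) [Ring A] : Type _ := AddMonoidAlgebra A ℤ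

/-- The involution `φ* = Σ tⁱ (φ₋ᵢ)*` on `A[t,t⁻¹]`. -/
def lstar {A : Type*} [Ring A] [StarRing A] (φ : Laurent A) : Laurent A :=
  AddMonoidAlgebra.ofCoeff
    (Finsupp.equivMapDomain (Equiv.neg ℤ) (Finsupp.mapRange star (star_zero _) φ.coeff))

/-- The specialization `ε₁ : A[t,t⁻¹] → A`, `φ ↦ Σᵢ φᵢ`. -/
def eps1 {A : Type*} [Ring A] (φ : Laurent A) : A := φ.coeff.sum fun _ a => a

/-- The pure paraunitary group `PPU(A)` (as a set). -/
def PPUA (A : Type*) [Ring A] [StarRing A] : Set (Laurent A) :=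
  {φ | (lstar φ * φ = 1 ∧ φ * lstar φ = 1) ∧ eps1 φ = 1}

/-- `PPU⁺(A) = PPU(A) ∩ A[t]`. -/
def PPUAplus (A : Type*) [Ring A] [StarRing A] : Set (Laurent A) :=
  {φ | φ ∈ PPUA A ∧ ∀ i < (0 : ℤ), φ.coeff i = 0}

/-- `PPU⁻(A) = PPU(A) ∩ A[t⁻¹]`. -/
def PPUAminus (A : Type*) [Ring A] [StarRing A] : Set (Laurent A) :=
  {φ | φ ∈ PPUA A ∧ ∀ i > (0 : ℤ), φ.coeff i = 0}

namespace LAux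
set_option linter.unusedSectionVars false
variable {A : Type*} [Ring A] [StarRing A]

lemma lstar_apply (φ : Laurent A) (i : ℤ) : (lstar φ).coeff i = star (φ.coeff (-i)) := rfl

lemma lstar_single (n : ℤ) (a : A) :
    lstar (AddMonoidAlgebra.single n a : Laurent A) = AddMonoidAlgebra.single (-n) (star a) := by
  ext i
  rw [lstar_apply, AddMonoidAlgebra.coeff_single, AddMonoidAlgebra.coeff_single, Finsupp.single_apply, Finsupp.single_apply, apply_ite star, star_zero]
  congr 1
  simp only [eq_iff_iff]
  omega

lemma lstar_add (φ ψ : Laurent A) : lstar (φ + ψ) = lstar φ + lstar ψ := by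
  ext i
  show star ((φ + ψ).coeff (-i)) = (lstar φ).coeff i + (lstar ψ).coeff i
  rw [AddMonoidAlgebra.coeff_add, Finsupp.add_apply, star_add]; rfl

lemma lstar_zero : lstar (0 : Laurent A) = 0 := by ext i; simp [lstar_apply]

lemma lstar_lstar (φ : Laurent A) : lstar (lstar φ) = φ := by
  ext i; simp [lstar_apply]

lemma lstar_one : lstar (1 : Laurent A) = 1 := by
  show lstar (AddMonoidAlgebra.single 0 1 : Laurent A) = AddMonoidAlgebra.single 0 1
  rw [lstar_single]; simp

lemma lstar_mul (φ ψ : Laurent A) : lstar (φ * ψ) = lstar ψ * lstar φ := by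
  induction φ using AddMonoidAlgebra.induction_linear with
  | zero => simp [lstar_zero]
  | add f g hf hg => rw [add_mul, lstar_add, hf, hg, lstar_add, mul_add]
  | single n a =>
    induction ψ using AddMonoidAlgebra.induction_linear with
    | zero => simp [lstar_zero]
    | add f g hf hg => rw [mul_add, lstar_add, hf, hg, lstar_add, add_mul]
    | single m b =>
      rw [AddMonoidAlgebra.single_mul_single, lstar_single, lstar_single, lstar_single,
        AddMonoidAlgebra.single_mul_single, star_mul, neg_add, add_comm]

lemma eps1_zero : eps1 (0 : Laurent A) = 0 := by simp [eps1]

lemma eps1_add (φ ψ : Laurent A) : eps1 (φ + ψ) = eps1 φ + eps1 ψ :=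
  by unfold eps1; rw [AddMonoidAlgebra.coeff_add]
     exact Finsupp.sum_add_index' (fun _ => rfl) (fun _ _ _ => rfl)

lemma eps1_single (n : ℤ) (a : A) : eps1 (AddMonoidAlgebra.single n a : Laurent A) = a := by
  unfold eps1; rw [AddMonoidAlgebra.coeff_single]; exact Finsupp.sum_single_index rfl

lemma eps1_one : eps1 (1 : Laurent A) = 1 := eps1_single 0 1

lemma eps1_mul (φ ψ : Laurent A) : eps1 (φ * ψ) = eps1 φ * eps1 ψ := by
  induction φ using AddMonoidAlgebra.induction_linear with
  | zero => simp [eps1_zero]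
  | add f g hf hg => rw [add_mul, eps1_add, hf, hg, eps1_add, add_mul]
  | single n a =>
    induction ψ using AddMonoidAlgebra.induction_linear with
    | zero => simp [eps1_zero]
    | add f g hf hg => rw [mul_add, eps1_add, hf, hg, eps1_add, mul_add]
    | single m b =>
      rw [AddMonoidAlgebra.single_mul_single, eps1_single, eps1_single, eps1_single]

lemma eps1_lstar (φ : Laurent A) : eps1 (lstar φ) = star (eps1 φ) := by
  induction φ using AddMonoidAlgebra.induction_linear with
  | zero => simp [lstar_zero, eps1_zero]
  | add f g hf hg => rw [lstar_add, eps1_add, hf, hg, eps1_add, star_add]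
  | single n a => rw [lstar_single, eps1_single, eps1_single]

lemma mul_supp_nonneg {φ ψ : Laurent A} (hφ : ∀ i < (0:ℤ), φ.coeff i = 0)
    (hψ : ∀ i < (0:ℤ), ψ.coeff i = 0) : ∀ i < (0:ℤ), (φ * ψ).coeff i = 0 := by
  intro i hi
  rw [AddMonoidAlgebra.coeff_mul]
  apply Finset.sum_eq_zero
  intro a₁ ha₁
  apply Finset.sum_eq_zero
  intro a₂ ha₂
  have h1 : (0:ℤ) ≤ a₁ := by
    by_contra h; exact (Finsupp.mem_support_iff.mp ha₁) (hφ a₁ (by omega))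
  have h2 : (0:ℤ) ≤ a₂ := by
    by_contra h; exact (Finsupp.mem_support_iff.mp ha₂) (hψ a₂ (by omega))
  exact if_neg (by omega)

lemma one_supp : ∀ i < (0:ℤ), (1 : Laurent A).coeff i = 0 := by
  intro i hi
  show (AddMonoidAlgebra.single 0 1 : Laurent A).coeff i = 0
  rw [AddMonoidAlgebra.coeff_single, Finsupp.single_apply, if_neg (by omega)]


lemma one_mem_PPUA : (1 : Laurent A) ∈ PPUA A :=
  ⟨⟨by rw [lstar_one, one_mul], by rw [lstar_one, one_mul]⟩, eps1_one⟩

lemma lstar_mem_PPUA {φ : Laurent A} (h : φ ∈ PPUA A) : lstar φ ∈ PPUA A := by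
  obtain ⟨⟨h1, h2⟩, h3⟩ := h
  refine ⟨⟨?_, ?_⟩, ?_⟩
  · rw [lstar_lstar]; exact h2
  · rw [lstar_lstar]; exact h1
  · rw [eps1_lstar, h3, star_one]

lemma mul_mem_PPUA {φ ψ : Laurent A} (hφ : φ ∈ PPUA A) (hψ : ψ ∈ PPUA A) :
    φ * ψ ∈ PPUA A := by
  refine ⟨⟨?_, ?_⟩, ?_⟩
  · rw [lstar_mul, mul_assoc, ← mul_assoc (lstar φ), hφ.1.1, one_mul, hψ.1.1]
  · rw [lstar_mul, mul_assoc, ← mul_assoc ψ, hψ.1.2, one_mul, hφ.1.2]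
  · rw [eps1_mul, hφ.2, hψ.2, one_mul]

lemma lstar_mem_plus {φ : Laurent A} (h : φ ∈ PPUAminus A) : lstar φ ∈ PPUAplus A :=
  ⟨lstar_mem_PPUA h.1, fun i hi => by rw [lstar_apply, h.2 (-i) (by omega), star_zero]⟩

lemma lstar_mem_minus {φ : Laurent A} (h : φ ∈ PPUAplus A) : lstar φ ∈ PPUAminus A :=
  ⟨lstar_mem_PPUA h.1, fun i hi => by rw [lstar_apply, h.2 (-i) (by omega), star_zero]⟩

lemma one_supp' : ∀ i > (0:ℤ), (1 : Laurent A).coeff i = 0 := by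
  intro i hi
  show (AddMonoidAlgebra.single 0 1 : Laurent A).coeff i = 0
  rw [AddMonoidAlgebra.coeff_single, Finsupp.single_apply, if_neg (by omega)]

lemma pure_eq_one {φ : Laurent A} (h : φ ∈ PPUAplus A ∩ PPUAminus A) : φ = 1 := by
  obtain ⟨⟨hP, hplus⟩, _, hminus⟩ := h
  have hsingle : φ = AddMonoidAlgebra.single 0 (φ.coeff 0) := by
    ext j
    rcases lt_trichotomy j 0 with hj | hj | hj
    · rw [hplus j hj, AddMonoidAlgebra.coeff_single, Finsupp.single_apply, if_neg (by omega)]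
    · subst hj; rw [AddMonoidAlgebra.coeff_single, Finsupp.single_apply, if_pos rfl]
    · rw [hminus j hj, AddMonoidAlgebra.coeff_single, Finsupp.single_apply, if_neg (by omega)]
  have he : eps1 φ = φ.coeff 0 := by
    conv_lhs => rw [hsingle]
    exact eps1_single 0 (φ.coeff 0)
  rw [hsingle, ← he, hP.2]
  rfl

end LAux

/--
Let `A` be a unital Banach `*`-algebra.  `PPU⁺(A)` is a submonoid of the group `PPU(A)`;
the set of inverses of elements of `PPU⁺(A)` (recall that in `PPU(A)` the inverse of `φ`
is `φ*`) is exactly `PPU⁻(A)`; and `PPU⁺(A) ∩ PPU⁻(A) = {1}`.  Hence `PPU⁺(A)` is a pure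
submonoid and is the positive cone of a right-invariant partial order on `PPU(A)`,
defined by `φ ≤ φ'` iff `φ'· φ⁻¹ ∈ PPU⁺(A)`, whose negative cone is `PPU⁻(A)`.
-/



theorem stmt4 {A : Type*} [NormedRing A] [StarRing A] [NormedStarGroup A] [CompleteSpace A] :
    -- PPU⁺(A) is a submonoid of PPU(A)
    (1 : Laurent A) ∈ PPUAplus A ∧
    (∀ φ ∈ PPUAplus A, ∀ ψ ∈ PPUAplus A, φ * ψ ∈ PPUAplus A) ∧
    -- inverses (in PPU(A) the inverse of φ is lstar φ)
    (∀ φ ∈ PPUA A, φ * lstar φ = 1 ∧ lstar φ * φ = 1) ∧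
    -- the set of inverses of PPU⁺(A) is exactly PPU⁻(A)
    lstar '' PPUAplus A = PPUAminus A ∧
    -- purity
    PPUAplus A ∩ PPUAminus A = {1} ∧
    -- the relation φ ≤ φ' iff φ'φ⁻¹ ∈ PPU⁺(A) is a right-invariant partial order on PPU(A):
    -- reflexivity
    (∀ φ ∈ PPUA A, φ * lstar φ ∈ PPUAplus A) ∧
    -- antisymmetry
    (∀ φ ∈ PPUA A, ∀ φ' ∈ PPUA A,
      φ' * lstar φ ∈ PPUAplus A → φ * lstar φ' ∈ PPUAplus A → φ = φ') ∧
    -- transitivity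
    (∀ φ ∈ PPUA A, ∀ φ' ∈ PPUA A, ∀ φ'' ∈ PPUA A,
      φ' * lstar φ ∈ PPUAplus A → φ'' * lstar φ' ∈ PPUAplus A →
      φ'' * lstar φ ∈ PPUAplus A) ∧
    -- right-invariance
    (∀ φ ∈ PPUA A, ∀ φ' ∈ PPUA A, ∀ ψ ∈ PPUA A,
      φ' * lstar φ ∈ PPUAplus A → (φ' * ψ) * lstar (φ * ψ) ∈ PPUAplus A) ∧
    -- positive cone is PPU⁺(A), negative cone is PPU⁻(A)
    (∀ φ ∈ PPUA A, (φ * lstar (1 : Laurent A) ∈ PPUAplus A ↔ φ ∈ PPUAplus A)) ∧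
    (∀ φ ∈ PPUA A, ((1 : Laurent A) * lstar φ ∈ PPUAplus A ↔ φ ∈ PPUAminus A)) :=  by
  classical
  open LAux in
  refine ⟨⟨one_mem_PPUA, one_supp⟩, ?_, ?_, ?_, ?_, ?_, ?_, ?_, ?_, ?_, ?_⟩
  · intro φ hφ ψ hψ
    exact ⟨mul_mem_PPUA hφ.1 hψ.1, mul_supp_nonneg hφ.2 hψ.2⟩
  · intro φ hφ
    exact ⟨hφ.1.2, hφ.1.1⟩
  · refine Set.Subset.antisymm ?_ ?_
    · rintro ψ ⟨φ, hφ, rfl⟩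
      exact lstar_mem_minus hφ
    · intro ψ hψ
      exact ⟨lstar ψ, lstar_mem_plus hψ, lstar_lstar ψ⟩
  · ext φ
    simp only [Set.mem_inter_iff, Set.mem_singleton_iff]
    constructor
    · intro h; exact pure_eq_one h
    · rintro rfl
      exact ⟨⟨one_mem_PPUA, one_supp⟩, one_mem_PPUA, one_supp'⟩
  · intro φ hφ
    rw [hφ.1.2]
    exact ⟨one_mem_PPUA, one_supp⟩
  · intro φ hφ φ' hφ' h1 h2
    have hu : φ' * lstar φ ∈ PPUAminus A := by
      refine ⟨h1.1, fun i hi => ?_⟩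
      have hz : (lstar (φ' * lstar φ)).coeff (-i) = 0 := by
        rw [lstar_mul, lstar_lstar]
        exact h2.2 (-i) (by omega)
      have e : (φ' * lstar φ).coeff i = star ((lstar (φ' * lstar φ)).coeff (-i)) := by
        rw [lstar_apply, neg_neg, star_star]
      rw [e, hz, star_zero]
    have hone : φ' * lstar φ = 1 := pure_eq_one ⟨h1, hu⟩
    calc φ = 1 * φ := (one_mul φ).symm
      _ = (φ' * lstar φ) * φ := by rw [hone]
      _ = φ' * (lstar φ * φ) := mul_assoc _ _ _
      _ = φ' := by rw [hφ.1.1, mul_one]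
  · intro φ hφ φ' hφ' φ'' hφ'' h1 h2
    have key : (φ'' * lstar φ') * (φ' * lstar φ) = φ'' * lstar φ := by
      rw [mul_assoc, ← mul_assoc (lstar φ'), hφ'.1.1, one_mul]
    rw [← key]
    exact ⟨mul_mem_PPUA h2.1 h1.1, mul_supp_nonneg h2.2 h1.2⟩
  · intro φ hφ φ' hφ' ψ hψ h1
    have key : (φ' * ψ) * lstar (φ * ψ) = φ' * lstar φ := by
      rw [lstar_mul, mul_assoc, ← mul_assoc ψ, hψ.1.2, one_mul]
    rw [key]
    exact h1
  · intro φ hφ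
    rw [lstar_one, mul_one]
  · intro φ hφ
    rw [one_mul]
    constructor
    · intro h
      rw [← lstar_lstar φ]
      exact lstar_mem_minus h
    · exact lstar_mem_plus
end
end

section
/- Let X be a compact Hausdorff space and A = C(X,ℂ) the C*-algebra of continuous complex-valued functions on X with pointwise operations and complex conjugation as involution. For a continuous function n : X → ℤ (ℤ discrete, so n is locally constant), let Φ(n) ∈ A[t,t⁻¹] be the Laurent polynomial whose i-th coefficient is the indicator function of n⁻¹({i}) (which is continuous). Then Φ is a group isomorphism from the additive group C(X,ℤ) of continuous ℤ-valued functions onto PPU(A), and Φ(n) ∈ PPU⁺(A) if and only if n(x) ≥ 0 for all x ∈ X. Thus PPU(A), right-ordered by the positive cone PPU⁺(A), is isomorphic as an ordered group to C(X,ℤ) with the pointwise order. -/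
/-!
Evaluating the coefficients at a point `x` is a `*`-homomorphism `C(X,ℂ)[t,t⁻¹] → ℂ[t,t⁻¹]`
commuting with `ε₁`, and a Laurent polynomial over `C(X,ℂ)` is determined by its evaluations.
Over `ℂ` (indeed over any star ring without zero divisors) `φ* φ = 1` forces `φ` to be a monomial
`c tᵏ`, and `ε₁ φ = 1` gives `c = 1`. So an element of `PPU(C(X,ℂ))` is `t^(N x)` at every
point `x`, where `N` is locally constant, i.e. it is `Φ(N)`; the algebraic and order statements
about `Φ` then reduce to statements about the exponents `n x`.
-/

noncomputable section

namespace Laurent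

open AddMonoidAlgebra

section Coefficients

variable {R : Type*} [Ring R]

lemma coeff_lstar [StarRing R] (φ : Laurent R) (i : ℤ) :
    (lstar φ).coeff i = star (φ.coeff (-i)) :=
  rfl

lemma lstar_single [StarRing R] (k : ℤ) (r : R) : lstar (single k r) = single (-k) (star r) := by
  classical
  ext i
  rw [coeff_lstar, coeff_single, coeff_single, Finsupp.single_apply, Finsupp.single_apply]
  by_cases hi : k = -i
  · rw [if_pos hi, if_pos (by omega)]
  · rw [if_neg hi, if_neg (by omega), star_zero]

lemma eps1_single (k : ℤ) (r : R) : eps1 (single k r) = r := by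
  rw [eps1, coeff_single, Finsupp.sum_single_index rfl]

lemma eq_zero_of_coeff_one_ne_zero {i : ℤ} (h : (1 : Laurent R).coeff i ≠ 0) : i = 0 := by
  classical
  rw [one_def, coeff_single, Finsupp.single_apply] at h
  by_contra hi
  exact h (if_neg (Ne.symm hi))

lemma coeff_mul_of_forall_le {φ ψ : Laurent R} {a b : ℤ} (ha : ∀ i ∈ φ.coeff.support, i ≤ a)
    (hb : ∀ j ∈ ψ.coeff.support, j ≤ b) : (φ * ψ).coeff (a + b) = φ.coeff a * ψ.coeff b := by
  classical
  rw [coeff_mul, Finsupp.sum, Finset.sum_eq_single a, Finsupp.sum, Finset.sum_eq_single b,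
    if_pos rfl]
  · exact fun j hj hjb => if_neg fun hij => hjb (by omega)
  · intro hb'; rw [Finsupp.notMem_support_iff.1 hb', mul_zero, ite_self]
  · refine fun i hi hia => Finset.sum_eq_zero fun j hj => if_neg fun hij => hia ?_
    have := ha i hi; have := hb j hj; omega
  · intro ha'
    exact Finset.sum_eq_zero fun j _ => by
      simp only [Finsupp.notMem_support_iff.1 ha', zero_mul, ite_self]

variable [StarRing R]

/-- If `φ* φ = 1` in `R[t,t⁻¹]`, then `φ` is a monomial: with `m ≤ M` the extreme exponents of
`φ`, the coefficient of `t^(M - m)` in `φ* φ` is `(φₘ)* φ_M ≠ 0`, so `M = m`. -/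
lemma exists_eq_single_of_lstar_mul_self_eq_one [NoZeroDivisors R] {φ : Laurent R}
    (h : lstar φ * φ = 1) : ∃ k r, φ = single k r := by
  obtain hφ | hφ := φ.coeff.support.eq_empty_or_nonempty
  · exact ⟨0, 0, coeff_injective (by rw [Finsupp.support_eq_empty.1 hφ, coeff_single,
      Finsupp.single_zero])⟩
  set m := φ.coeff.support.min' hφ
  set M := φ.coeff.support.max' hφ
  have hstar : ∀ i ∈ (lstar φ).coeff.support, i ≤ -m := fun i hi => by
    have : -i ∈ φ.coeff.support := by
      rw [Finsupp.mem_support_iff, coeff_lstar] at hi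
      exact Finsupp.mem_support_iff.2 fun h0 => hi (by rw [h0, star_zero])
    have := φ.coeff.support.min'_le _ this
    omega
  have htop : (lstar φ * φ).coeff (-m + M) ≠ 0 := by
    rw [coeff_mul_of_forall_le hstar fun j hj => φ.coeff.support.le_max' j hj, coeff_lstar,
      neg_neg]
    exact mul_ne_zero (star_ne_zero.2 (Finsupp.mem_support_iff.1 (φ.coeff.support.min'_mem hφ)))
      (Finsupp.mem_support_iff.1 (φ.coeff.support.max'_mem hφ))
  rw [h] at htop
  have hmM := eq_zero_of_coeff_one_ne_zero htop
  refine ⟨M, φ.coeff M, coeff_injective (Finsupp.support_subset_singleton.1 fun i hi => ?_)⟩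
  have := φ.coeff.support.min'_le i hi
  have := φ.coeff.support.le_max' i hi
  rw [Finset.mem_singleton]
  omega

lemma exists_eq_single_one_of_mem_PPUA [NoZeroDivisors R] {φ : Laurent R} (h : φ ∈ PPUA R) :
    ∃ k, φ = single k 1 := by
  obtain ⟨⟨hφ, -⟩, heps⟩ := h
  obtain ⟨k, r, rfl⟩ := exists_eq_single_of_lstar_mul_self_eq_one hφ
  rw [eps1_single] at heps
  exact ⟨k, by rw [heps]⟩

end Coefficients

section Evaluation

variable {X : Type*} [TopologicalSpace X]

def evalAt (x : X) : Laurent C(X, ℂ) →+* Laurent ℂ :=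
  mapRingHom ℤ (ContinuousMap.evalAlgHom ℂ ℂ x).toRingHom

lemma coeff_evalAt (x : X) (φ : Laurent C(X, ℂ)) (i : ℤ) : (evalAt x φ).coeff i = φ.coeff i x :=
  coeff_mapRingHom ..

lemma ext_evalAt {φ ψ : Laurent C(X, ℂ)} (h : ∀ x, evalAt x φ = evalAt x ψ) : φ = ψ := by
  ext i x
  rw [← coeff_evalAt, h, coeff_evalAt]

lemma evalAt_lstar (x : X) (φ : Laurent C(X, ℂ)) : evalAt x (lstar φ) = lstar (evalAt x φ) := by
  ext i
  simp only [coeff_evalAt, coeff_lstar, ContinuousMap.star_apply]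

lemma eps1_evalAt (x : X) (φ : Laurent C(X, ℂ)) : eps1 (evalAt x φ) = eps1 φ x := by
  have : (evalAt x φ).coeff = φ.coeff.mapRange (· x) (ContinuousMap.zero_apply x) :=
    Finsupp.ext (coeff_evalAt x φ)
  rw [eps1, eps1, this, Finsupp.sum_mapRange_index fun _ => rfl, Finsupp.sum, Finsupp.sum,
    ContinuousMap.sum_apply]

lemma evalAt_mem_PPUA {x : X} {φ : Laurent C(X, ℂ)} (h : φ ∈ PPUA C(X, ℂ)) :
    evalAt x φ ∈ PPUA ℂ := by
  obtain ⟨⟨h₁, h₂⟩, h₃⟩ := h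
  refine ⟨⟨?_, ?_⟩, ?_⟩
  · rw [← evalAt_lstar, ← map_mul, h₁, map_one]
  · rw [← evalAt_lstar, ← map_mul, h₂, map_one]
  · rw [eps1_evalAt, h₃, ContinuousMap.one_apply]

end Evaluation

section PointwiseMonomial

variable {X : Type*} [TopologicalSpace X]

def fiberIndicator (n : C(X, ℤ)) (i : ℤ) : C(X, ℂ) :=
  (ContinuousMap.mk (fun k : ℤ => if k = i then (1 : ℂ) else 0)
    continuous_of_discreteTopology).comp n

lemma support_fiberIndicator_subset (n : C(X, ℤ)) :
    Function.support (fiberIndicator n) ⊆ Set.range n := by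
  intro i hi
  by_contra hni
  exact hi (ContinuousMap.ext fun x => if_neg fun hx => hni ⟨x, hx⟩)

variable [CompactSpace X]

/-- The paper's `Φ(n)`; at each point `x` it is the monomial `t^(n x)`. -/
def pointwiseMonomial (n : C(X, ℤ)) : Laurent C(X, ℂ) :=
  ofCoeff (Finsupp.ofSupportFinite (fiberIndicator n)
    ((isCompact_range n.continuous).finite_of_discrete.subset (support_fiberIndicator_subset n)))

lemma coeff_pointwiseMonomial (n : C(X, ℤ)) (i : ℤ) (x : X) :
    (pointwiseMonomial n).coeff i x = if n x = i then 1 else 0 := rfl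

lemma evalAt_pointwiseMonomial (x : X) (n : C(X, ℤ)) :
    evalAt x (pointwiseMonomial n) = single (n x) 1 := by
  classical
  ext i
  rw [coeff_evalAt, coeff_pointwiseMonomial, coeff_single, Finsupp.single_apply]

lemma pointwiseMonomial_add (m n : C(X, ℤ)) :
    pointwiseMonomial (m + n) = pointwiseMonomial m * pointwiseMonomial n :=
  ext_evalAt fun x => by
    rw [map_mul, evalAt_pointwiseMonomial, evalAt_pointwiseMonomial, evalAt_pointwiseMonomial,
      single_mul_single, mul_one, ContinuousMap.add_apply]

lemma pointwiseMonomial_zero : pointwiseMonomial (0 : C(X, ℤ)) = 1 :=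
  ext_evalAt fun x => by
    rw [evalAt_pointwiseMonomial, map_one, ContinuousMap.zero_apply, one_def]

lemma lstar_pointwiseMonomial (n : C(X, ℤ)) :
    lstar (pointwiseMonomial n) = pointwiseMonomial (-n) :=
  ext_evalAt fun x => by
    rw [evalAt_lstar, evalAt_pointwiseMonomial, evalAt_pointwiseMonomial, lstar_single, star_one,
      ContinuousMap.neg_apply]

lemma eps1_pointwiseMonomial (n : C(X, ℤ)) : eps1 (pointwiseMonomial n) = 1 := by
  ext x
  rw [← eps1_evalAt, evalAt_pointwiseMonomial, eps1_single, ContinuousMap.one_apply]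

lemma pointwiseMonomial_mem_PPUA (n : C(X, ℤ)) : pointwiseMonomial n ∈ PPUA C(X, ℂ) := by
  refine ⟨⟨?_, ?_⟩, eps1_pointwiseMonomial n⟩ <;>
    rw [lstar_pointwiseMonomial, ← pointwiseMonomial_add, ← pointwiseMonomial_zero]
  · rw [neg_add_cancel]
  · rw [add_neg_cancel]

lemma pointwiseMonomial_injective : Function.Injective (pointwiseMonomial (X := X)) := by
  intro m n h
  ext x
  have := congrArg (evalAt x) h
  rwa [evalAt_pointwiseMonomial, evalAt_pointwiseMonomial,
    (single_left_injective one_ne_zero).eq_iff] at this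

/-- An element of `PPU(C(X,ℂ))` is a monomial `t^(N x)` at every point `x`; the exponent `N` is
continuous because `N⁻¹{k}` is the set where the `k`-th coefficient does not vanish. -/
lemma range_pointwiseMonomial : Set.range (pointwiseMonomial (X := X)) = PPUA C(X, ℂ) := by
  classical
  refine Set.Subset.antisymm (Set.range_subset_iff.2 pointwiseMonomial_mem_PPUA) fun φ hφ => ?_
  choose N hN using fun x => exists_eq_single_one_of_mem_PPUA (evalAt_mem_PPUA (x := x) hφ)
  have hfiber (k : ℤ) : N ⁻¹' {k} = φ.coeff k ⁻¹' {0}ᶜ := by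
    ext x
    have hcoeff := coeff_evalAt x φ k
    rw [hN x, coeff_single, Finsupp.single_apply] at hcoeff
    split_ifs at hcoeff with hx <;> simp [hx, ← hcoeff]
  have hN_cont : Continuous N := continuous_discrete_rng.2 fun k => by
    rw [hfiber k]
    exact isOpen_compl_singleton.preimage (φ.coeff k).continuous
  exact ⟨⟨N, hN_cont⟩, ext_evalAt fun x => by rw [evalAt_pointwiseMonomial, hN x]; rfl⟩

lemma pointwiseMonomial_mem_PPUAplus_iff (n : C(X, ℤ)) :
    pointwiseMonomial n ∈ PPUAplus C(X, ℂ) ↔ ∀ x, 0 ≤ n x := by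
  refine ⟨fun ⟨_, h⟩ x => ?_, fun h => ⟨pointwiseMonomial_mem_PPUA n, fun i hi => ?_⟩⟩
  · by_contra! hx
    have := congrArg (· x) (h (n x) hx)
    simp [coeff_pointwiseMonomial] at this
  · ext x
    rw [coeff_pointwiseMonomial, ContinuousMap.zero_apply, if_neg (by have := h x; omega)]

lemma pointwiseMonomial_mul_lstar_mem_PPUAplus_iff (m n : C(X, ℤ)) :
    pointwiseMonomial n * lstar (pointwiseMonomial m) ∈ PPUAplus C(X, ℂ) ↔ ∀ x, m x ≤ n x := by
  rw [lstar_pointwiseMonomial, ← pointwiseMonomial_add, ← sub_eq_add_neg,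
    pointwiseMonomial_mem_PPUAplus_iff]
  simp only [ContinuousMap.sub_apply, sub_nonneg]

end PointwiseMonomial

end Laurent

theorem stmt5_general {X : Type*} [TopologicalSpace X] [CompactSpace X] :
    ∃ Φ : C(X, ℤ) → Laurent C(X, ℂ),
      -- the coefficient formula: (Φ n)ᵢ is the indicator function of n⁻¹({i})
      (∀ (n : C(X, ℤ)) (i : ℤ) (x : X), (Φ n).coeff i x = if n x = i then 1 else 0) ∧
      -- Φ is a homomorphism from the additive group C(X,ℤ) to the multiplicative
      -- structure of C(X,ℂ)[t,t⁻¹]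
      (∀ m n : C(X, ℤ), Φ (m + n) = Φ m * Φ n) ∧
      -- Φ is injective with image exactly PPU(C(X,ℂ))
      Function.Injective Φ ∧
      Set.range Φ = PPUA C(X, ℂ) ∧
      -- positivity: Φ n ∈ PPU⁺ iff n ≥ 0 pointwise
      (∀ n : C(X, ℤ), Φ n ∈ PPUAplus C(X, ℂ) ↔ ∀ x : X, 0 ≤ n x) ∧
      -- order isomorphism: Φ m ≤ Φ n (for the right-invariant order with positive cone
      -- PPU⁺) iff m ≤ n pointwise
      (∀ m n : C(X, ℤ), Φ n * lstar (Φ m) ∈ PPUAplus C(X, ℂ) ↔ ∀ x : X, m x ≤ n x) :=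
  ⟨Laurent.pointwiseMonomial, Laurent.coeff_pointwiseMonomial, Laurent.pointwiseMonomial_add,
    Laurent.pointwiseMonomial_injective, Laurent.range_pointwiseMonomial,
    Laurent.pointwiseMonomial_mem_PPUAplus_iff,
    Laurent.pointwiseMonomial_mul_lstar_mem_PPUAplus_iff⟩

/--
Let `X` be a compact Hausdorff space and `A = C(X,ℂ)` the commutative C*-algebra of
continuous complex-valued functions on `X`.  For `n ∈ C(X,ℤ)` let `Φ(n) ∈ A[t,t⁻¹]` be
the Laurent polynomial whose `i`-th coefficient is the indicator function of `n⁻¹({i})`.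
Then `Φ` is a group isomorphism from the additive group `C(X,ℤ)` onto `PPU(A)`, and
`Φ(n) ∈ PPU⁺(A)` iff `n(x) ≥ 0` for all `x`.  Thus `PPU(A)`, right-ordered by the
positive cone `PPU⁺(A)` (i.e. `φ ≤ φ'` iff `φ'φ⁻¹ = φ'·(lstar φ) ∈ PPU⁺(A)`), is
isomorphic as an ordered group to `C(X,ℤ)` with the pointwise order.
-/
theorem stmt5 {X : Type*} [TopologicalSpace X] [CompactSpace X] [T2Space X] :
    ∃ Φ : C(X, ℤ) → Laurent C(X, ℂ),
      -- the coefficient formula: (Φ n)ᵢ is the indicator function of n⁻¹({i})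
      (∀ (n : C(X, ℤ)) (i : ℤ) (x : X), (Φ n).coeff i x = if n x = i then 1 else 0) ∧
      -- Φ is a homomorphism from the additive group C(X,ℤ) to the multiplicative
      -- structure of C(X,ℂ)[t,t⁻¹]
      (∀ m n : C(X, ℤ), Φ (m + n) = Φ m * Φ n) ∧
      -- Φ is injective with image exactly PPU(C(X,ℂ))
      Function.Injective Φ ∧
      Set.range Φ = PPUA C(X, ℂ) ∧
      -- positivity: Φ n ∈ PPU⁺ iff n ≥ 0 pointwise
      (∀ n : C(X, ℤ), Φ n ∈ PPUAplus C(X, ℂ) ↔ ∀ x : X, 0 ≤ n x) ∧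
      -- order isomorphism: Φ m ≤ Φ n (for the right-invariant order with positive cone
      -- PPU⁺) iff m ≤ n pointwise
      (∀ m n : C(X, ℤ), Φ n * lstar (Φ m) ∈ PPUAplus C(X, ℂ) ↔ ∀ x : X, m x ≤ n x) :=
  stmt5_general
end
end
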